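/- If G is a smallest graph (with respect to number of vertices) having γ∞(G) < θ(G) and, among such smallest graphs, has the maximum number of edges, then G is both vertex-critical and edge-critical with respect to θ. -/

import Mathlib

open SimpleGraph

variable {V : Type*}

/-- `D` is a dominating set of `G`. -/
def IsDomSet (G : SimpleGraph V) (D : Finset V) : Prop :=
  ∀ v : V, ∃ u ∈ D, u = v ∨ G.Adj u v

/-- A family of guard configurations closed under defending any attack: every member
of the family is a dominating set, and for every attack on an unguarded vertex `v`
some guard on a neighbour of `v` can move to `v` so that the resulting configuration
is again in the family.  The defender can perpetually defend every infinite sequence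
of attacks starting from `D` iff `D` belongs to such a family. -/
def IsEDFamily [DecidableEq V] (G : SimpleGraph V) (F : Set (Finset V)) : Prop :=
  ∀ D ∈ F, IsDomSet G D ∧
    ∀ v ∉ D, ∃ u ∈ D, G.Adj u v ∧ insert v (D.erase u) ∈ F

/-- The eternal domination number `γ∞(G)`: the least number of guards admitting a
winning defence strategy. -/
noncomputable def eternalDomNum [DecidableEq V] (G : SimpleGraph V) : ℕ :=
  sInf {k | ∃ F : Set (Finset V), F.Nonempty ∧ (∀ D ∈ F, D.card = k) ∧ IsEDFamily G F}

/-- The independence number `α(G)`. -/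
noncomputable def indepNum (G : SimpleGraph V) : ℕ :=
  sSup {k | ∃ s : Finset V, s.card = k ∧ ∀ u ∈ s, ∀ v ∈ s, ¬ G.Adj u v}

/-- The clique covering number `θ(G)`: the least `k` such that the vertex set can be
partitioned into `k` cliques, i.e. the complement of `G` is properly `k`-colourable. -/
noncomputable def cliqueCoverNum (G : SimpleGraph V) : ℕ :=
  sInf {k | Nonempty (Gᶜ.Coloring (Fin k))}

/-- The domination number `γ(G)`. -/
noncomputable def domNum (G : SimpleGraph V) : ℕ :=
  sInf {k | ∃ D : Finset V, D.card = k ∧ IsDomSet G D}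

/-!
Deleting a vertex or adding an edge lowers `θ` by at most one, since the affected vertex can be
given a clique of its own, and neither operation raises `γ∞`. For a vertex deletion this is because
either some configuration of an optimal defence avoids `v`, and the defence restricts to `G - v`,
or every configuration contains `v`, and then the guard on `v` never moves and can be dropped.
Now `G - v` has fewer vertices and `G + uv` has more edges than `G`, so by the choice of `G` both
satisfy `θ ≤ γ∞`; together with `γ∞(G) < θ(G)` this forces `θ` to drop by exactly one.
-/

open Finset

section CliqueCover

variable {W : Type*} {G : SimpleGraph V} {k : ℕ}

theorem cliqueCoverNum_le_of_colorable (h : Gᶜ.Colorable k) : cliqueCoverNum G ≤ k :=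
  Nat.sInf_le h

theorem colorable_cliqueCoverNum [Finite V] (G : SimpleGraph V) :
    Gᶜ.Colorable (cliqueCoverNum G) := by
  have := Fintype.ofFinite V
  exact Nat.sInf_mem (s := {k | Gᶜ.Colorable k}) ⟨_, Gᶜ.colorable_of_fintype⟩

theorem SimpleGraph.Iso.cliqueCoverNum_eq {H : SimpleGraph W} (e : G ≃g H) :
    cliqueCoverNum G = cliqueCoverNum H := by
  unfold cliqueCoverNum
  congr 1
  ext k
  exact ⟨Colorable.of_hom (Embedding.complEquiv e.symm.toEmbedding).toHom,
    Colorable.of_hom (Embedding.complEquiv e.toEmbedding).toHom⟩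

theorem SimpleGraph.compl_induce (G : SimpleGraph V) (s : Set V) :
    (G.induce s)ᶜ = Gᶜ.induce s := by
  ext a b
  simp [Subtype.ext_iff]

theorem cliqueCoverNum_induce_le [Finite V] (G : SimpleGraph V) (s : Set V) :
    cliqueCoverNum (G.induce s) ≤ cliqueCoverNum G :=
  cliqueCoverNum_le_of_colorable <| by
    rw [compl_induce]
    exact (colorable_cliqueCoverNum G).of_hom (Embedding.induce s).toHom

theorem SimpleGraph.Colorable.of_induce_ne {K : SimpleGraph V} {v : V}
    (h : (K.induce {u | u ≠ v}).Colorable k) : K.Colorable (k + 1) := by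
  classical
  obtain ⟨c⟩ := h
  refine ⟨Coloring.mk (fun w => if hw : w = v then Fin.last k else (c ⟨w, hw⟩).castSucc) ?_⟩
  intro a b hab
  by_cases ha : a = v <;> by_cases hb : b = v
  · exact absurd (ha.trans hb.symm) hab.ne
  · simpa [ha, hb] using (Fin.castSucc_lt_last _).ne'
  · simp [ha, hb]
  · simpa [ha, hb] using c.valid (show (K.induce {u | u ≠ v}).Adj ⟨a, ha⟩ ⟨b, hb⟩ from hab)

theorem cliqueCoverNum_le_induce_add_one [Finite V] (G : SimpleGraph V) (v : V) :
    cliqueCoverNum G ≤ cliqueCoverNum (G.induce {u | u ≠ v}) + 1 :=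
  cliqueCoverNum_le_of_colorable <| Colorable.of_induce_ne <| by
    rw [← compl_induce]
    exact colorable_cliqueCoverNum _

theorem SimpleGraph.induce_sup_edge_ne (G : SimpleGraph V) (u v : V) :
    (G ⊔ edge u v).induce {w | w ≠ v} = G.induce {w | w ≠ v} := by
  ext a b
  have ha : (a : V) ≠ v := a.2
  have hb : (b : V) ≠ v := b.2
  simp [edge_adj, ha, hb]

theorem cliqueCoverNum_le_sup_edge_add_one [Finite V] (G : SimpleGraph V) (u v : V) :
    cliqueCoverNum G ≤ cliqueCoverNum (G ⊔ edge u v) + 1 :=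
  calc cliqueCoverNum G ≤ cliqueCoverNum (G.induce {w | w ≠ v}) + 1 :=
        cliqueCoverNum_le_induce_add_one G v
    _ = cliqueCoverNum ((G ⊔ edge u v).induce {w | w ≠ v}) + 1 := by rw [induce_sup_edge_ne]
    _ ≤ cliqueCoverNum (G ⊔ edge u v) + 1 := by grw [cliqueCoverNum_induce_le]

end CliqueCover

section EternalDomination

variable {W : Type*} [DecidableEq V] [DecidableEq W] {G G' : SimpleGraph V}
  {H : SimpleGraph W} {F : Set (Finset V)} {k : ℕ}

theorem eternalDomNum_le (hne : F.Nonempty) (hcard : ∀ D ∈ F, #D = k) (hF : IsEDFamily G F) :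
    eternalDomNum G ≤ k :=
  Nat.sInf_le ⟨F, hne, hcard, hF⟩

theorem exists_isEDFamily_card_eq_eternalDomNum [Finite V] (G : SimpleGraph V) :
    ∃ F : Set (Finset V), F.Nonempty ∧ (∀ D ∈ F, #D = eternalDomNum G) ∧ IsEDFamily G F := by
  have := Fintype.ofFinite V
  refine Nat.sInf_mem (s := {k | ∃ F : Set (Finset V), F.Nonempty ∧ (∀ D ∈ F, #D = k) ∧
    IsEDFamily G F}) ⟨_, {univ}, Set.singleton_nonempty _, fun D hD => congrArg card hD, ?_⟩
  rintro D rfl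
  exact ⟨fun v => ⟨v, mem_univ v, Or.inl rfl⟩, fun v hv => absurd (mem_univ v) hv⟩

theorem IsEDFamily.mono (h : G ≤ G') (hF : IsEDFamily G F) : IsEDFamily G' F := fun D hD =>
  ⟨fun w => (hF D hD).1 w |>.imp fun _ => And.imp_right (Or.imp_right fun hadj => h hadj),
    fun w hw => (hF D hD).2 w hw |>.imp fun _ => And.imp_right (And.imp_left fun hadj => h hadj)⟩

theorem eternalDomNum_anti [Finite V] (h : G ≤ G') : eternalDomNum G' ≤ eternalDomNum G :=
  let ⟨_, hne, hcard, hF⟩ := exists_isEDFamily_card_eq_eternalDomNum G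
  eternalDomNum_le hne hcard (hF.mono h)

theorem IsEDFamily.comap (f : H ↪g G) (hF : IsEDFamily G F) :
    IsEDFamily H {E | E.map f.toEmbedding ∈ F} := by
  intro E hE
  obtain ⟨hdom, hdef⟩ := hF _ hE
  refine ⟨fun w => ?_, fun w hw => ?_⟩
  · obtain ⟨_, hu, hw⟩ := hdom (f w)
    obtain ⟨a, ha, rfl⟩ := mem_map.1 hu
    exact ⟨a, ha, hw.imp (fun h => f.injective h) f.map_adj_iff.1⟩
  · obtain ⟨_, hu, hadj, hmove⟩ := hdef (f w) (by simpa using hw)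
    obtain ⟨a, ha, rfl⟩ := mem_map.1 hu
    refine ⟨a, ha, f.map_adj_iff.1 hadj, ?_⟩
    simpa [map_insert, map_erase] using hmove

theorem eternalDomNum_le_of_embedding (f : H ↪g G) (hF : IsEDFamily G F)
    (hcard : ∀ D ∈ F, #D = k) {E : Finset W} (hE : E.map f.toEmbedding ∈ F) :
    eternalDomNum H ≤ k :=
  eternalDomNum_le ⟨E, hE⟩ (fun _ hE' => (card_map _).symm.trans (hcard _ hE')) (hF.comap f)

theorem SimpleGraph.Iso.eternalDomNum_le [Finite W] (e : G ≃g H) :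
    eternalDomNum G ≤ eternalDomNum H := by
  obtain ⟨F, ⟨D, hD⟩, hcard, hF⟩ := exists_isEDFamily_card_eq_eternalDomNum H
  exact eternalDomNum_le_of_embedding e.toEmbedding hF hcard
    (E := D.map e.symm.toEmbedding.toEmbedding)
    (by convert hD using 1; ext; simp only [mem_map]; simp)

theorem SimpleGraph.Iso.eternalDomNum_eq [Finite V] (e : G ≃g H) :
    eternalDomNum G = eternalDomNum H :=
  have : Finite W := .of_equiv V e.toEquiv
  le_antisymm e.eternalDomNum_le e.symm.eternalDomNum_le

theorem IsEDFamily.induce_ne_of_forall_mem {v : V} (hv : ∀ D ∈ F, v ∈ D) (hF : IsEDFamily G F) :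
    IsEDFamily (G.induce {u | u ≠ v})
      {E | insert v (E.map (Function.Embedding.subtype _)) ∈ F} := by
  set ι := Function.Embedding.subtype (· ∈ {u | u ≠ v})
  have hvE (E : Finset {u | u ≠ v}) : v ∉ E.map ι := by simp [ι]
  have hdefend (E : Finset {u | u ≠ v}) (hE : insert v (E.map ι) ∈ F) (w) (hw : w ∉ E) :
      ∃ a ∈ E, (G.induce {u | u ≠ v}).Adj a w ∧ insert v ((insert w (E.erase a)).map ι) ∈ F := by
    have hwv : (w : V) ≠ v := w.2
    obtain ⟨u, hu, hadj, hmove⟩ := (hF _ hE).2 w (by simpa [ι, hwv] using hw)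
    -- the guard on `v` cannot be the one that moves, since `v` stays guarded
    have huv : u ≠ v := by
      rintro rfl
      simpa [erase_insert (hvE E), hwv.symm, hvE E] using hv _ hmove
    obtain ⟨a, ha, rfl⟩ := mem_map.1 ((mem_insert.1 hu).resolve_left huv)
    refine ⟨a, ha, hadj, ?_⟩
    rwa [map_insert, map_erase, insert_comm, ← erase_insert_of_ne huv.symm]
  intro E hE
  refine ⟨fun w => ?_, hdefend E hE⟩
  by_cases hw : w ∈ E
  · exact ⟨w, hw, Or.inl rfl⟩
  · obtain ⟨a, ha, hadj, -⟩ := hdefend E hE w hw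
    exact ⟨a, ha, Or.inr hadj⟩

theorem eternalDomNum_induce_ne_le [Finite V] (G : SimpleGraph V) (v : V) :
    eternalDomNum (G.induce {u | u ≠ v}) ≤ eternalDomNum G := by
  obtain ⟨F, ⟨D, hD⟩, hcard, hF⟩ := exists_isEDFamily_card_eq_eternalDomNum G
  by_cases hv : ∀ D ∈ F, v ∈ D
  · refine (eternalDomNum_le ⟨(D.erase v).subtype _, ?_⟩ (fun E hE => ?_)
      (hF.induce_ne_of_forall_mem hv)).trans (Nat.sub_le _ 1)
    · change insert v (((D.erase v).subtype _).map (Function.Embedding.subtype _)) ∈ F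
      rwa [subtype_map_of_mem (p := (· ∈ {u | u ≠ v})) fun _ => ne_of_mem_erase,
        insert_erase (hv D hD)]
    · have := hcard _ hE
      rw [card_insert_of_notMem (by simp), card_map] at this
      omega
  · push Not at hv
    obtain ⟨D, hD, hvD⟩ := hv
    refine eternalDomNum_le_of_embedding (Embedding.induce _) hF hcard
      (E := D.subtype (· ∈ {u | u ≠ v})) ?_
    change (D.subtype _).map (Function.Embedding.subtype _) ∈ F
    rwa [subtype_map_of_mem (p := (· ∈ {u | u ≠ v})) fun _ hu => ne_of_mem_of_not_mem hu hvD]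

end EternalDomination

/-- If `G` is a smallest graph with `γ∞(G) < θ(G)` and, among such smallest graphs,
one with the maximum number of edges, then `G` is both vertex-critical and
edge-critical with respect to `θ`. -/
theorem smallest_max_edges_is_critical (n : ℕ) (G : SimpleGraph (Fin n))
    (hlt : eternalDomNum G < cliqueCoverNum G)
    (hmin : ∀ m, m < n → ∀ H : SimpleGraph (Fin m),
      ¬ eternalDomNum H < cliqueCoverNum H)
    (hmax : ∀ H : SimpleGraph (Fin n), eternalDomNum H < cliqueCoverNum H →
      H.edgeSet.ncard ≤ G.edgeSet.ncard) :
    (∀ v : Fin n, cliqueCoverNum (G.induce {u | u ≠ v}) = cliqueCoverNum G - 1) ∧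
    (∀ u v : Fin n, u ≠ v → ¬ G.Adj u v →
      cliqueCoverNum (G ⊔ SimpleGraph.fromEdgeSet {s(u, v)}) = cliqueCoverNum G - 1) := by
  have hdeleted (v : Fin n) :
      cliqueCoverNum (G.induce {u | u ≠ v}) ≤ eternalDomNum (G.induce {u | u ≠ v}) := by
    obtain ⟨m, rfl⟩ : ∃ m, n = m + 1 := ⟨n - 1, by have := v.pos; omega⟩
    have e := Iso.comap (finSuccAboveEquiv v) (G.induce {u | u ≠ v})
    rw [← e.cliqueCoverNum_eq, ← e.eternalDomNum_eq]
    exact not_lt.1 (hmin m m.lt_succ_self _)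
  refine ⟨fun v => ?_, fun u v huv hnadj => ?_⟩
  · have := cliqueCoverNum_le_induce_add_one G v
    have := eternalDomNum_induce_ne_le G v
    have := hdeleted v
    omega
  · change cliqueCoverNum (G ⊔ edge u v) = _
    have hedges : G.edgeSet.ncard < (G ⊔ edge u v).edgeSet.ncard :=
      Set.ncard_lt_ncard (edgeSet_ssubset_edgeSet.2 (lt_sup_edge _ _ _ huv hnadj)) (Set.toFinite _)
    have : cliqueCoverNum (G ⊔ edge u v) ≤ eternalDomNum (G ⊔ edge u v) :=
      not_lt.1 fun h => (hmax _ h).not_gt hedges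
    have := eternalDomNum_anti (G := G) (G' := G ⊔ edge u v) le_sup_left
    have := cliqueCoverNum_le_sup_edge_add_one G u v
    omega
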